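/- arXiv:math/0109127 — 2 statements merged into one kernel-verified Lean document; each statement's English description precedes it below -/
import Mathlib

section
/- Let A, B ⊂ ℤ be finite sets whose elements are distinct modulo M, with D_A = {gcd(a-a', M) : a,a' ∈ A, a ≠ a'} and D_B analogous. If D_A ∩ D_B = ∅, then |A|·|B| ≤ M, with equality if and only if A ⊕ B = ℤ/Mℤ. -/
/-!
If a + b ≡ a' + b' (mod M) with a ≠ a', then also b ≠ b' and a - a' ≡ b' - b, so
gcd(a - a', M) = gcd(b' - b, M) would lie in D_A ∩ D_B. Hence (a, b) ↦ a + b mod M is injective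
on A × B, which gives |A|·|B| ≤ M, and equality holds exactly when this injection onto ℤ/Mℤ
is a bijection.
-/

open Finset

theorem Int.gcd_eq_gcd_of_dvd_sub {m x y : ℤ} (h : m ∣ x - y) : x.gcd m = y.gcd m := by
  obtain ⟨k, hk⟩ := h
  rw [show x = y + k * m by linarith, Int.gcd_add_mul_right_left]

theorem Finset.card_eq_card_iff_existsUnique_of_injOn {α β : Type*} [Fintype β] {s : Finset α}
    {f : α → β} (hf : Set.InjOn f s) :
    #s = Fintype.card β ↔ ∀ y, ∃! x, x ∈ s ∧ f x = y := by
  classical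
  constructor
  · intro hcard y
    obtain ⟨x, hx, rfl⟩ :=
      surjOn_of_injOn_of_card_le (t := univ) f (fun x _ => mem_univ (f x)) hf (by simp [hcard])
        (mem_univ y)
    exact ⟨x, ⟨hx, rfl⟩, fun x' ⟨hx', hfx'⟩ => hf hx' hx hfx'⟩
  · intro hrep
    have himage : s.image f = univ :=
      eq_univ_of_forall fun y => by
        obtain ⟨x, ⟨hx, hfx⟩, -⟩ := hrep y
        exact mem_image.mpr ⟨x, hx, hfx⟩
    rw [← card_image_of_injOn hf, himage, card_univ]

/-- `D_A` in the notation of the statement. -/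
def diffGcds (M : ℕ) (A : Finset ℤ) : Set ℕ :=
  {m : ℕ | ∃ a ∈ A, ∃ a' ∈ A, a ≠ a' ∧ Int.gcd (a - a') M = m}

theorem injOn_add_mod_of_diffGcds_disjoint {M : ℕ} {A B : Finset ℤ}
    (hA : ∀ a ∈ A, ∀ a' ∈ A, (M : ℤ) ∣ a - a' → a = a')
    (hB : ∀ b ∈ B, ∀ b' ∈ B, (M : ℤ) ∣ b - b' → b = b')
    (hD : diffGcds M A ∩ diffGcds M B = ∅) :
    Set.InjOn (fun p : ℤ × ℤ => ((p.1 + p.2 : ℤ) : ZMod M)) (A ×ˢ B : Finset (ℤ × ℤ)) := by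
  rintro ⟨a, b⟩ hab ⟨a', b'⟩ hab' hsum
  simp only [coe_product, Set.mem_prod, mem_coe] at hab hab' hsum
  obtain ⟨ha, hb⟩ := hab
  obtain ⟨ha', hb'⟩ := hab'
  have hdvd : (M : ℤ) ∣ (a - a') - (b' - b) := by
    rw [ZMod.intCast_eq_intCast_iff_dvd_sub, dvd_sub_comm] at hsum
    rwa [show a - a' - (b' - b) = a + b - (a' + b') by ring]
  by_cases haa : a = a'
  · subst haa
    exact Prod.ext rfl (hB b hb b' hb' (by simpa using hdvd))
  · exfalso
    have hbb : b' ≠ b := fun h => haa (hA a ha a' ha' (by simpa [h] using hdvd))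
    have hgcd : Int.gcd (a - a') M ∈ diffGcds M A ∩ diffGcds M B :=
      ⟨⟨a, ha, a', ha', haa, rfl⟩, ⟨b', hb', b, hb, hbb, (Int.gcd_eq_gcd_of_dvd_sub hdvd).symm⟩⟩
    simp [hD] at hgcd

theorem stmt_5 (M : ℕ) (hM : 0 < M) (A B : Finset ℤ)
    (hA : ∀ a ∈ A, ∀ a' ∈ A, (M : ℤ) ∣ a - a' → a = a')
    (hB : ∀ b ∈ B, ∀ b' ∈ B, (M : ℤ) ∣ b - b' → b = b')
    (hD : {m : ℕ | ∃ a ∈ A, ∃ a' ∈ A, a ≠ a' ∧ Int.gcd (a - a') M = m} ∩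
            {m : ℕ | ∃ b ∈ B, ∃ b' ∈ B, b ≠ b' ∧ Int.gcd (b - b') M = m} = ∅) :
    A.card * B.card ≤ M ∧
      (A.card * B.card = M ↔
        ∀ n : ℤ, ∃! p : ℤ × ℤ, p.1 ∈ A ∧ p.2 ∈ B ∧ (M : ℤ) ∣ p.1 + p.2 - n) := by
  have : NeZero M := ⟨hM.ne'⟩
  have hinj := injOn_add_mod_of_diffGcds_disjoint hA hB hD
  have hcard : Fintype.card (ZMod M) = M := ZMod.card M
  rw [← card_product, ← hcard]
  refine ⟨card_le_card_of_injOn _ (fun p _ => mem_univ _) hinj |>.trans_eq card_univ, ?_⟩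
  rw [card_eq_card_iff_existsUnique_of_injOn hinj, ZMod.intCast_surjective.forall, hcard]
  refine forall_congr' fun n => existsUnique_congr fun p => ?_
  rw [mem_product, ZMod.intCast_eq_intCast_iff_dvd_sub, dvd_sub_comm, and_assoc]
end

section
/- Let A be a finite set of integers with |A|² = pqr·L for distinct primes p, q, r, N = pqr, and α_m = A_m/φ(N/m) with A_m = #{(a,a') ∈ A×A : gcd(a-a', N) = m}. If Φ_p, Φ_q, Φ_r, Φ_{pr} all divide A(x), then (q-1)α_{pr} + α_{pqr} = qL, (q-1)α_r + α_{qr} = qL, (q-1)α_p + α_{pq} = qL, and (q-1)α_1 + α_q = qL. -/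
/-!
Since `A(x)` vanishes at the primitive `p`-th, `r`-th and `pr`-th roots of unity, it vanishes at
every root of unity `ζ ≠ 1` of order dividing `pr`. For `ω` a primitive `pr`-th root of unity,
expanding `∑_{k < pr} ∑_{a, a'} ω^{k(a - a' - c)}` in both orders then shows that the differences
`a - a'` are equidistributed modulo `pr`: every residue class receives `|A|² / pr = qL` pairs.
As `φ(pr/m)` residues `c` have `gcd(c, pr) = m`, there are `φ(pr/m) qL` pairs with
`gcd(a - a', pr) = m`. Since `q ∤ pr`, these are exactly the pairs with `gcd(a - a', pqr) ∈ {m, mq}`,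
and `φ(pqr/m) = (q - 1) φ(pr/m)`, `φ(pqr/mq) = φ(pr/m)`; the four identities are the cases
`m = pr, r, p, 1`.
-/

open Finset

theorem sum_zpow_eq_zero_of_pow_eq_one {A : Finset ℤ} {d : ℕ}
    (hA : ∀ e, e ∣ d → e ≠ 1 → ∀ ξ : ℂ, IsPrimitiveRoot ξ e → ∑ a ∈ A, ξ ^ a = 0)
    {ζ : ℂ} (hζ : ζ ^ d = 1) (hζ1 : ζ ≠ 1) : ∑ a ∈ A, ζ ^ a = 0 :=
  hA _ (orderOf_dvd_of_pow_eq_one hζ) (by rwa [Ne, orderOf_eq_one_iff]) _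
    (IsPrimitiveRoot.orderOf ζ)

theorem sum_product_zpow_sub_sub {K : Type*} [Field K] (A : Finset ℤ) {z : K} (hz : z ≠ 0)
    (c : ℤ) :
    ∑ x ∈ A ×ˢ A, z ^ (x.1 - x.2 - c) =
      (∑ a ∈ A, z ^ a) * (∑ a ∈ A, z ^ (-a)) * z ^ (-c) := by
  rw [sum_product, sum_mul_sum, sum_mul]
  refine sum_congr rfl fun a _ => ?_
  rw [sum_mul]
  refine sum_congr rfl fun b _ => ?_
  rw [← zpow_add₀ hz, ← zpow_add₀ hz, sub_eq_add_neg, sub_eq_add_neg]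

theorem IsPrimitiveRoot.sum_range_pow_zpow {K : Type*} [Field K] {ω : K} {d : ℕ}
    (hω : IsPrimitiveRoot ω d) (m : ℤ) :
    ∑ k ∈ range d, (ω ^ m) ^ k = if (d : ℤ) ∣ m then (d : K) else 0 := by
  split_ifs with hdm
  · simp [(hω.zpow_eq_one_iff_dvd m).mpr hdm]
  · have hm1 : ω ^ m ≠ 1 := fun h => hdm ((hω.zpow_eq_one_iff_dvd m).mp h)
    rw [geom_sum_eq hm1, ← zpow_natCast, ← zpow_mul, mul_comm, zpow_mul, zpow_natCast,
      hω.pow_eq_one, one_zpow, sub_self, zero_div]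

theorem mul_card_filter_sub_modEq {A : Finset ℤ} {d : ℕ} (hd : 0 < d)
    (hA : ∀ ζ : ℂ, ζ ^ d = 1 → ζ ≠ 1 → ∑ a ∈ A, ζ ^ a = 0) (c : ℤ) :
    d * #{x ∈ A ×ˢ A | x.1 - x.2 ≡ c [ZMOD d]} = #A ^ 2 := by
  obtain ⟨ω, hω⟩ : ∃ ω : ℂ, IsPrimitiveRoot ω d := ⟨_, Complex.isPrimitiveRoot_exp d hd.ne'⟩
  have hω0 : ω ≠ 0 := hω.ne_zero hd.ne'
  have h_rows : ∑ k ∈ range d, ∑ x ∈ A ×ˢ A, (ω ^ k) ^ (x.1 - x.2 - c) = (#A ^ 2 : ℕ) := by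
    rw [sum_eq_single_of_mem 0 (mem_range.2 hd)]
    · simp [sq]
    · intro k hk hk0
      have hk1 : (ω ^ k) ^ d = 1 := by rw [← pow_mul, mul_comm, pow_mul, hω.pow_eq_one, one_pow]
      rw [sum_product_zpow_sub_sub A (pow_ne_zero k hω0),
        hA _ hk1 (hω.pow_ne_one_of_pos_of_lt hk0 (mem_range.1 hk)), zero_mul, zero_mul]
  have h_cols : ∑ k ∈ range d, ∑ x ∈ A ×ˢ A, (ω ^ k) ^ (x.1 - x.2 - c) =
      (d * #{x ∈ A ×ˢ A | x.1 - x.2 ≡ c [ZMOD d]} : ℕ) := by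
    have hswap : ∀ (k : ℕ) (m : ℤ), (ω ^ k) ^ m = (ω ^ m) ^ k := fun k m => by
      rw [← zpow_natCast, ← zpow_mul, mul_comm, zpow_mul, zpow_natCast]
    simp only [hswap]
    rw [sum_comm]
    simp only [hω.sum_range_pow_zpow]
    rw [sum_ite, sum_const_zero, add_zero, sum_const, nsmul_eq_mul, mul_comm]
    push_cast
    congr 3
    exact filter_congr fun x _ => (Int.modEq_iff_dvd.trans dvd_sub_comm).symm
  exact_mod_cast h_cols.symm.trans h_rows

theorem mul_card_filter_gcd_eq_totient_mul {ι : Type*} (s : Finset ι) (f : ι → ℤ) {d m N : ℕ}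
    (hd : 0 < d) (hm : m ∣ d) (h : ∀ c : ℤ, d * #{i ∈ s | f i ≡ c [ZMOD d]} = N) :
    d * #{i ∈ s | Int.gcd (f i) d = m} = (d / m).totient * N := by
  classical
  set g : ι → ℕ := fun i => (f i % d).toNat
  have hg : ∀ i, (g i : ℤ) = f i % d := fun i =>
    Int.toNat_of_nonneg (Int.emod_nonneg _ (by omega))
  have hg_lt : ∀ i, g i < d := fun i => by
    have := Int.emod_lt_of_pos (f i) (by omega : (0 : ℤ) < d)
    have := hg i
    omega
  have hgcd : ∀ i, Int.gcd (f i) d = d.gcd (g i) := fun i => by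
    rw [← Int.gcd_emod, ← hg, Int.gcd_natCast_natCast, Nat.gcd_comm]
  have hmod : ∀ i, ∀ c < d, f i ≡ c [ZMOD d] ↔ g i = c := fun i c hc => by
    rw [Int.ModEq, Int.emod_eq_of_lt (a := (c : ℤ)) (by omega) (by omega), ← hg]
    omega
  rw [card_eq_sum_card_fiberwise (f := g) (t := {c ∈ range d | d.gcd c = m}), mul_sum,
    Nat.totient_div_of_dvd hm, ← smul_eq_mul, ← sum_const]
  · refine sum_congr rfl fun c hc => ?_
    rw [mem_filter, mem_range] at hc
    rw [filter_filter, ← h c]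
    congr 2
    refine filter_congr fun i _ => ?_
    rw [hmod i c hc.1, hgcd]
    exact ⟨And.right, fun hgc => ⟨hgc ▸ hc.2, hgc⟩⟩
  · intro i hi
    simp only [coe_filter, Set.mem_ofPred_eq, mem_range] at hi ⊢
    exact ⟨hg_lt i, hgcd i ▸ hi.2⟩

theorem Nat.gcd_mul_prime_eq_or_eq_mul_iff {a n q m : ℕ} (hq : q.Prime) (hqn : ¬ q ∣ n)
    (hm : m ∣ n) : a.gcd (n * q) = m ∨ a.gcd (n * q) = m * q ↔ a.gcd n = m := by
  have hqm : ¬ q ∣ m := fun h => hqn (h.trans hm)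
  have hqg : ¬ q ∣ a.gcd n := fun h => hqn (h.trans (Nat.gcd_dvd_right a n))
  rw [Nat.Coprime.gcd_mul a (Nat.coprime_comm.1 (hq.coprime_iff_not_dvd.2 hqn))]
  by_cases hqa : q ∣ a
  · rw [Nat.gcd_eq_right hqa, Nat.mul_left_inj hq.ne_zero]
    exact ⟨fun h => h.resolve_left fun h => hqm (h ▸ dvd_mul_left q _), Or.inr⟩
  · rw [Nat.coprime_comm.1 (hq.coprime_iff_not_dvd.2 hqa), mul_one]
    exact ⟨fun h => h.resolve_right fun h => hqg (h ▸ dvd_mul_left q m), Or.inl⟩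

theorem card_filter_gcd_mul_prime_add {ι : Type*} (s : Finset ι) (f : ι → ℤ) {n q m : ℕ}
    (hn : n ≠ 0) (hq : q.Prime) (hqn : ¬ q ∣ n) (hm : m ∣ n) :
    #{i ∈ s | Int.gcd (f i) (n * q : ℕ) = m} + #{i ∈ s | Int.gcd (f i) (n * q : ℕ) = m * q} =
      #{i ∈ s | Int.gcd (f i) n = m} := by
  classical
  have hm0 : m ≠ 0 := ne_zero_of_dvd_ne_zero hn hm
  have hmq : m ≠ m * q := fun h => hq.one_lt.ne' ((Nat.mul_eq_left hm0).1 h.symm)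
  rw [← card_union_of_disjoint, ← filter_or]
  · refine congrArg card (filter_congr fun i _ => ?_)
    simp only [Int.gcd_eq_natAbs, Int.natAbs_natCast]
    exact Nat.gcd_mul_prime_eq_or_eq_mul_iff hq hqn hm
  · exact disjoint_filter.2 fun i _ h1 h2 => hmq (h1.symm.trans h2)

theorem sub_one_mul_div_totient_add_div_totient {A : Finset ℤ} {n q m L : ℕ} (hn : 0 < n)
    (hq : q.Prime) (hqn : ¬ q ∣ n) (hm : m ∣ n)
    (hA : ∀ ζ : ℂ, ζ ^ n = 1 → ζ ≠ 1 → ∑ a ∈ A, ζ ^ a = 0) (hL : #A ^ 2 = n * q * L) :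
    let α : ℕ → ℝ := fun k =>
      (#{x ∈ A ×ˢ A | Int.gcd (x.1 - x.2) (n * q : ℕ) = k} : ℝ) / ((n * q / k).totient : ℝ)
    ((q : ℝ) - 1) * α m + α (m * q) = q * L := by
  intro α
  have hsplit := card_filter_gcd_mul_prime_add (A ×ˢ A) (fun x => x.1 - x.2) hn.ne' hq hqn hm
  have hcount : #{x ∈ A ×ˢ A | Int.gcd (x.1 - x.2) n = m} = (n / m).totient * (q * L) := by
    refine Nat.eq_of_mul_eq_mul_left hn ?_
    rw [mul_card_filter_gcd_eq_totient_mul _ _ hn hm (mul_card_filter_sub_modEq hn hA), hL]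
    ring
  have hcop : (n / m).Coprime q :=
    Nat.Coprime.coprime_dvd_left (Nat.div_dvd_of_dvd hm)
      (Nat.coprime_comm.1 (hq.coprime_iff_not_dvd.2 hqn))
  have htot_m : (n * q / m).totient = (n / m).totient * (q - 1) := by
    rw [← Nat.div_mul_right_comm hm, Nat.totient_mul hcop, Nat.totient_prime hq]
  have htot_mq : (n * q / (m * q)).totient = (n / m).totient := by
    rw [Nat.mul_div_mul_right _ _ hq.pos]
  have htot_pos : ((n / m).totient : ℝ) ≠ 0 := by
    have := Nat.totient_pos.2 (Nat.div_pos (Nat.le_of_dvd hn hm) (Nat.pos_of_dvd_of_pos hm hn))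
    positivity
  have hq1 : (q : ℝ) - 1 ≠ 0 := sub_ne_zero.2 (by exact_mod_cast hq.one_lt.ne')
  simp only [α, htot_m, htot_mq]
  push_cast [Nat.cast_sub hq.one_le]
  field_simp
  have := congrArg (Nat.cast : ℕ → ℝ) (hsplit.trans hcount)
  push_cast at this
  linear_combination this

theorem stmt_11_general (p q r L : ℕ) (hp : p.Prime) (hq : q.Prime) (hr : r.Prime)
    (hpq : p ≠ q) (hqr : q ≠ r)
    (A : Finset ℤ) (hL : A.card ^ 2 = p * q * r * L)
    (hΦp : ∀ ξ : ℂ, IsPrimitiveRoot ξ p → ∑ a ∈ A, ξ ^ a = 0)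
    (hΦr : ∀ ξ : ℂ, IsPrimitiveRoot ξ r → ∑ a ∈ A, ξ ^ a = 0)
    (hΦpr : ∀ ξ : ℂ, IsPrimitiveRoot ξ (p * r) → ∑ a ∈ A, ξ ^ a = 0) :
    (let α : ℕ → ℝ := fun m =>
      (((A ×ˢ A).filter (fun x => Int.gcd (x.1 - x.2) (p * q * r) = m)).card : ℝ) /
        (Nat.totient (p * q * r / m));
    ((q : ℝ) - 1) * α (p * r) + α (p * q * r) = (q : ℝ) * L ∧
      ((q : ℝ) - 1) * α r + α (q * r) = (q : ℝ) * L ∧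
      ((q : ℝ) - 1) * α p + α (p * q) = (q : ℝ) * L ∧
      ((q : ℝ) - 1) * α 1 + α q = (q : ℝ) * L) := by
  intro α
  have hA : ∀ ζ : ℂ, ζ ^ (p * r) = 1 → ζ ≠ 1 → ∑ a ∈ A, ζ ^ a = 0 := by
    refine fun ζ => sum_zpow_eq_zero_of_pow_eq_one fun e he he1 => ?_
    obtain ⟨y, z, hy, hz, rfl⟩ := Nat.dvd_mul.1 he
    rcases (Nat.dvd_prime hp).1 hy with rfl | rfl <;>
      rcases (Nat.dvd_prime hr).1 hz with rfl | rfl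
    exacts [absurd rfl he1, by simpa using hΦr, by simpa using hΦp, hΦpr]
  have hqpr : ¬ q ∣ p * r := fun h => (hq.dvd_mul.1 h).elim
    (fun h => hpq ((Nat.prime_dvd_prime_iff_eq hq hp).1 h).symm)
    (fun h => hqr ((Nat.prime_dvd_prime_iff_eq hq hr).1 h))
  have key : ∀ m, m ∣ p * r → ((q : ℝ) - 1) * α m + α (m * q) = q * L := fun m hm => by
    have := sub_one_mul_div_totient_add_div_totient (L := L) (Nat.mul_pos hp.pos hr.pos) hq hqpr
      hm hA (hL.trans (by ring))
    simpa only [α, Nat.cast_mul, mul_right_comm (p : ℤ), mul_right_comm p] using this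
  refine ⟨?_, ?_, key p (dvd_mul_right p r), ?_⟩
  · simpa only [mul_right_comm p] using key (p * r) dvd_rfl
  · simpa only [mul_comm r] using key r (dvd_mul_left r p)
  · simpa only [one_mul] using key 1 (one_dvd _)

theorem stmt_11 (p q r L : ℕ) (hp : p.Prime) (hq : q.Prime) (hr : r.Prime)
    (hpq : p ≠ q) (hpr : p ≠ r) (hqr : q ≠ r)
    (A : Finset ℤ) (hL : A.card ^ 2 = p * q * r * L)
    (hΦp : ∀ ξ : ℂ, IsPrimitiveRoot ξ p → ∑ a ∈ A, ξ ^ a = 0)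
    (hΦq : ∀ ξ : ℂ, IsPrimitiveRoot ξ q → ∑ a ∈ A, ξ ^ a = 0)
    (hΦr : ∀ ξ : ℂ, IsPrimitiveRoot ξ r → ∑ a ∈ A, ξ ^ a = 0)
    (hΦpr : ∀ ξ : ℂ, IsPrimitiveRoot ξ (p * r) → ∑ a ∈ A, ξ ^ a = 0) :
    (let α : ℕ → ℝ := fun m =>
      (((A ×ˢ A).filter (fun x => Int.gcd (x.1 - x.2) (p * q * r) = m)).card : ℝ) /
        (Nat.totient (p * q * r / m));
    ((q : ℝ) - 1) * α (p * r) + α (p * q * r) = (q : ℝ) * L ∧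
      ((q : ℝ) - 1) * α r + α (q * r) = (q : ℝ) * L ∧
      ((q : ℝ) - 1) * α p + α (p * q) = (q : ℝ) * L ∧
      ((q : ℝ) - 1) * α 1 + α q = (q : ℝ) * L) :=
  stmt_11_general p q r L hp hq hr hpq hqr A hL hΦp hΦr hΦpr
end
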